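/- For any binary word X, N_{1001}(X) = N_1(X)·N_{100}(X) + N_{110}(X) − C(N_{10}(X), 2). In particular the count of the length-4 pattern 1001 is an algebraic (polynomial) function of pattern counts of length at most 3. -/

import Mathlib

/-!
Prepending a `0` to `X` changes no count occurring in the identity, since all those patterns
start with `1`. Prepending a `1` raises the left side by `N₀₀₁` and the right side by an
expression in counts of length at most 3, so by induction on `X` the identity reduces to a
formula for `N₀₀₁`. That formula is proved by the same induction, using `N₀₀ = C(N₀, 2)` and
`N₁ N₀ = N₁₀ + N₀₁`.
-/

def patCount (w X : List Bool) : ℕ := X.sublists.count w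

theorem patCount_cons_right (w : List Bool) (a : Bool) (X : List Bool) :
    patCount w (a :: X) = patCount w X + (X.sublists.map (a :: ·)).count w := by
  rw [patCount, (List.sublists_cons_perm_append a X).count_eq, List.count_append, patCount]

@[simp]
theorem patCount_cons_cons (a b : Bool) (w X : List Bool) :
    patCount (b :: w) (a :: X) = patCount (b :: w) X + if b = a then patCount w X else 0 := by
  rw [patCount_cons_right]
  split_ifs with h
  · subst h
    rw [List.count_map_of_injective _ _ List.cons_injective]
    rfl
  · rw [List.count_eq_zero.2]
    simp only [List.mem_map, List.cons.injEq, not_exists, not_and]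
    exact fun _ _ hab _ => h hab.symm

@[simp]
theorem patCount_nil_left (X : List Bool) : patCount [] X = 1 := by
  induction X with
  | nil => rfl
  | cons a X ih => rw [patCount_cons_right, ih, List.count_eq_zero.2 (by simp)]

theorem patCount_replicate (k : ℕ) (b : Bool) (X : List Bool) :
    patCount (List.replicate k b) X = (X.count b).choose k := by
  induction X generalizing k with
  | nil => cases k <;> rfl
  | cons a X ih =>
    cases k with
    | zero => simp
    | succ k =>
      rw [List.replicate_succ, patCount_cons_cons, ← List.replicate_succ, ih, ih, List.count_cons]
      by_cases h : b = a
      · subst h; simp [Nat.choose_succ_succ', add_comm]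
      · simp [h, Ne.symm h]

@[simp]
theorem patCount_singleton (b : Bool) (X : List Bool) : patCount [b] X = X.count b := by
  simpa using patCount_replicate 1 b X

@[simp]
theorem patCount_pair_self (b : Bool) (X : List Bool) : patCount [b, b] X = (X.count b).choose 2 :=
  patCount_replicate 2 b X

theorem count_true_mul_count_false (X : List Bool) :
    X.count true * X.count false = patCount [true, false] X + patCount [false, true] X := by
  induction X with
  | nil => rfl
  | cons c X ih =>
    cases c <;> simp <;> lia

theorem two_mul_cast_choose_two (n : ℕ) : 2 * (n.choose 2 : ℤ) = n * (n - 1) := by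
  have h := Nat.cast_choose_two ℚ n
  exact_mod_cast (by rw [h]; ring : (2 * (n.choose 2 : ℚ)) = n * (n - 1))

theorem add_choose_two (a b : ℕ) : (a + b).choose 2 = a.choose 2 + a * b + b.choose 2 := by
  induction b with
  | zero => simp
  | succ b ih => rw [← add_assoc, Nat.choose_succ_succ', ih, Nat.choose_succ_succ' b]; simp; ring

theorem patCount_false_false_true (X : List Bool) :
    (patCount [false, false, true] X : ℤ)
      = X.count true * (X.count false).choose 2 + patCount [true, false, false] X
        + patCount [true, false] X - patCount [true, false] X * X.count false := by
  induction X with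
  | nil => rfl
  | cons c X ih =>
    cases c
    · have hmul : (X.count true * X.count false : ℤ)
          = patCount [true, false] X + patCount [false, true] X :=
        mod_cast count_true_mul_count_false X
      simp [add_choose_two _ 1]
      linear_combination ih - hmul
    · simp
      linear_combination ih - two_mul_cast_choose_two (X.count false)

theorem N1001_relation (X : List Bool) :
    (patCount [true, false, false, true] X : ℤ)
      = (patCount [true] X : ℤ) * (patCount [true, false, false] X : ℤ)
        + (patCount [true, true, false] X : ℤ)
        - (Nat.choose (patCount [true, false] X) 2 : ℤ) := by
  induction X with
  | nil => rfl
  | cons c X ih =>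
    cases c
    · simpa using ih
    · simp [add_choose_two] at ih ⊢
      linear_combination ih + patCount_false_false_true X
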